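/- arXiv:1904.00538 — 4 statements merged into one kernel-verified Lean document; each statement's English description precedes it below -/
import Mathlib

section
/- Every mechanism on tie-free profiles that is anonymous, neutral, ordinal, unilateral and truthful is a convex combination of the mechanisms J^{1,q}_U for q ∈ {1,...,m}. -/
open Finset

/-- A normalized preference function: maps into `[0,1]` and attains both `0` and `1`. -/
def IsPref {m : ℕ} (u : Fin m → ℝ) : Prop :=
  (∀ j, 0 ≤ u j ∧ u j ≤ 1) ∧ (∃ j, u j = 0) ∧ (∃ j, u j = 1)

/-- A tie-free normalized preference function. -/
def IsPrefU {m : ℕ} (u : Fin m → ℝ) : Prop :=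
  IsPref u ∧ Function.Injective u

/-- A profile of normalized preference functions. -/
def IsProfile {n m : ℕ} (u : Fin n → Fin m → ℝ) : Prop :=
  ∀ i, IsPref (u i)

/-- A tie-free profile. -/
def IsProfileU {n m : ℕ} (u : Fin n → Fin m → ℝ) : Prop :=
  ∀ i, IsPrefU (u i)

/-- `p` is a probability distribution over the `m` candidates. -/
def IsDist {m : ℕ} (p : Fin m → ℝ) : Prop :=
  (∀ j, 0 ≤ p j) ∧ ∑ j, p j = 1

/-- Social welfare of candidate `j` under profile `u`. -/
def Wel {n m : ℕ} (j : Fin m) (u : Fin n → Fin m → ℝ) : ℝ :=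
  ∑ i, u i j

/-- Range voting: the candidate of maximal social welfare, ties broken
toward the smaller index. -/
noncomputable def RV {n m : ℕ} (hm : 0 < m) (u : Fin n → Fin m → ℝ) : Fin m :=
  (Finset.univ.filter fun j => ∀ j', Wel j' u ≤ Wel j u).min' (by
    obtain ⟨j, -, hj⟩ := Finset.exists_max_image (Finset.univ : Finset (Fin m))
      (fun j => Wel j u) ⟨⟨0, hm⟩, Finset.mem_univ _⟩
    exact ⟨j, Finset.mem_filter.2 ⟨Finset.mem_univ _, fun j' => hj j' (Finset.mem_univ _)⟩⟩)

/-- Expected social welfare of a randomized mechanism `J` (given as the map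
sending a profile to the probability of each candidate winning). -/
noncomputable def expWel {n m : ℕ} (J : (Fin n → Fin m → ℝ) → Fin m → ℝ)
    (u : Fin n → Fin m → ℝ) : ℝ :=
  ∑ j, J u j * Wel j u

/-- Rank of candidate `j` in preference `v`, ties broken in favor of the
smaller candidate index (the most preferred candidate has rank 1). -/
noncomputable def rnk {m : ℕ} (v : Fin m → ℝ) (j : Fin m) : ℕ :=
  (Finset.univ.filter fun j' => v j < v j' ∨ (v j' = v j ∧ j' ≤ j)).card

/-- The mechanism `J^{1,q}`: pick a voter uniformly at random, then a winner
uniformly at random among that voter's `q` most preferred candidates. -/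
noncomputable def Jone (q : ℕ) {n m : ℕ} (u : Fin n → Fin m → ℝ) : Fin m → ℝ :=
  fun j => (∑ i : Fin n, if rnk (u i) j ≤ q then ((q : ℝ))⁻¹ else 0) / (n : ℝ)

/-- `⌊m^{1/3}⌋`. -/
noncomputable def mroot3 (m : ℕ) : ℕ := ⌊(m : ℝ) ^ ((1 : ℝ)/3)⌋₊

/-- The mechanism `J*`, running `J^{1,1}` and `J^{1,⌊m^{1/3}⌋}` each with
probability `1/2`. -/
noncomputable def Jstar {n m : ℕ} (u : Fin n → Fin m → ℝ) : Fin m → ℝ :=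
  fun j => (Jone 1 u j + Jone (mroot3 m) u j) / 2

/-- Voter with preference `v` prefers `j₀` to `j₁` (ties toward the smaller
candidate index). -/
def Prefers {m : ℕ} (v : Fin m → ℝ) (j₀ j₁ : Fin m) : Prop :=
  v j₁ < v j₀ ∨ (v j₀ = v j₁ ∧ j₀ < j₁)

noncomputable instance {m : ℕ} (v : Fin m → ℝ) (j₀ j₁ : Fin m) :
    Decidable (Prefers v j₀ j₁) := by unfold Prefers; infer_instance

/-- The mechanism `J^{2,q}`: pick two distinct candidates uniformly at random,
let each voter vote for the one it prefers; if one of the two gets at least `q`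
votes it wins, otherwise the winner is one of the two by a fair coin. -/
noncomputable def Jtwo (q : ℕ) {n m : ℕ} (u : Fin n → Fin m → ℝ) : Fin m → ℝ :=
  fun j =>
    (∑ j₀ : Fin m, ∑ j₁ : Fin m,
      if j₀ = j₁ then 0
      else
        if q ≤ (Finset.univ.filter fun i => Prefers (u i) j₀ j₁).card then
          (if j = j₀ then (1 : ℝ) else 0)
        else if q ≤ n - (Finset.univ.filter fun i => Prefers (u i) j₀ j₁).card then
          (if j = j₁ then (1 : ℝ) else 0)
        else ((if j = j₀ then (1 : ℝ)/2 else 0) + (if j = j₁ then (1 : ℝ)/2 else 0)))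
      / ((m * (m - 1) : ℕ) : ℝ)

/-- `J` assigns a probability distribution to every tie-free profile. -/
def MechU {n m : ℕ} (J : (Fin n → Fin m → ℝ) → Fin m → ℝ) : Prop :=
  ∀ u, IsProfileU u → IsDist (J u)

/-- Truthfulness (on tie-free profiles). -/
def Truthful {n m : ℕ} (J : (Fin n → Fin m → ℝ) → Fin m → ℝ) : Prop :=
  ∀ u, IsProfileU u → ∀ (i : Fin n) (v : Fin m → ℝ), IsPrefU v →
    ∑ j, J (Function.update u i v) j * u i j ≤ ∑ j, J u j * u i j

/-- Ordinality (on tie-free profiles). -/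
def OrdinalMech {n m : ℕ} (J : (Fin n → Fin m → ℝ) → Fin m → ℝ) : Prop :=
  ∀ u u' : Fin n → Fin m → ℝ, IsProfileU u → IsProfileU u' →
    (∀ i (j j' : Fin m), u i j < u i j' ↔ u' i j < u' i j') → J u = J u'

/-- Unilateral mechanism (on tie-free profiles): depends only on one voter. -/
def Unilateral {n m : ℕ} (J : (Fin n → Fin m → ℝ) → Fin m → ℝ) : Prop :=
  ∃ i : Fin n, ∀ u u' : Fin n → Fin m → ℝ, IsProfileU u → IsProfileU u' →
    u i = u' i → J u = J u'

/-- Duple mechanism (on tie-free profiles): supported on two fixed candidates. -/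
def Duple {n m : ℕ} (J : (Fin n → Fin m → ℝ) → Fin m → ℝ) : Prop :=
  ∃ j₀ j₁ : Fin m, j₀ ≠ j₁ ∧ ∀ u, IsProfileU u → ∀ j, j ≠ j₀ → j ≠ j₁ → J u j = 0

/-- Neutral mechanism (on tie-free profiles). -/
def Neutral {n m : ℕ} (J : (Fin n → Fin m → ℝ) → Fin m → ℝ) : Prop :=
  ∀ τ : Equiv.Perm (Fin m), ∀ u : Fin n → Fin m → ℝ, IsProfileU u →
    ∀ j, J (fun i => u i ∘ τ) j = J u (τ j)

/-- Anonymous mechanism (on tie-free profiles). -/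
def AnonymousMech {n m : ℕ} (J : (Fin n → Fin m → ℝ) → Fin m → ℝ) : Prop :=
  ∀ σ : Equiv.Perm (Fin n), ∀ u : Fin n → Fin m → ℝ, IsProfileU u →
    J (fun i => u (σ i)) = J u

/-- `ratio_U(J)`: infimum of the welfare ratio over tie-free profiles. -/
noncomputable def ratioU {n m : ℕ} (hm : 0 < m)
    (J : (Fin n → Fin m → ℝ) → Fin m → ℝ) : ℝ :=
  sInf {r | ∃ u, IsProfileU u ∧ r = expWel J u / Wel (RV hm u) u}

/-- `R_k`: tie-free normalized preferences taking values in `{0,1/k,…,1}`. -/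
def Rk {m : ℕ} (k : ℕ) (u : Fin m → ℝ) : Prop :=
  IsPrefU u ∧ ∀ j, ∃ t : ℕ, t ≤ k ∧ u j = (t : ℝ) / k

/-- `a(u)`: the number of `t ∈ {0,…,k-1}` such that exactly one of `t/k` and
`(t+1)/k` lies in the image of `u`. -/
noncomputable def aOf {m : ℕ} (k : ℕ) (u : Fin m → ℝ) : ℕ :=
  ((Finset.range k).filter fun t : ℕ =>
    ((∃ j : Fin m, u j = (t : ℝ) / k) ∧ ¬ (∃ j : Fin m, u j = ((t : ℝ) + 1) / k)) ∨
    ((∃ j : Fin m, u j = ((t : ℝ) + 1) / k) ∧ ¬ (∃ j : Fin m, u j = (t : ℝ) / k))).card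

/-- `C_k = {u ∈ R_k : a(u) = 2}`. -/
def Ck {m : ℕ} (k : ℕ) (u : Fin m → ℝ) : Prop :=
  Rk k u ∧ aOf k u = 2

/-- `count(u)`: the number of candidates with `u`-value above `1/2`. -/
noncomputable def countOf {m : ℕ} (u : Fin m → ℝ) : ℕ :=
  (Finset.univ.filter fun j => (1 : ℝ)/2 < u j).card

/-- `rank(u,j) = #{j' : u(j') ≥ u(j)}`. -/
noncomputable def rankOf {m : ℕ} (u : Fin m → ℝ) (j : Fin m) : ℕ :=
  (Finset.univ.filter fun j' => u j ≤ u j').card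

/-- `D_k = D_k^{(a)} ∪ D_k^{(b)} ∪ D_k^{(c)}` (`⟨0,hm⟩` is the first candidate). -/
def Dk {m : ℕ} (hm : 0 < m) (k : ℕ) (u : Fin m → ℝ) : Prop :=
  Ck k u ∧
    ((countOf u ≤ 2 ∧ (1 : ℝ)/2 < u ⟨0, hm⟩) ∨
     (countOf u = 1 ∧ mroot3 m < rankOf u ⟨0, hm⟩) ∨
     (countOf u = mroot3 m + 1 ∧ rankOf u ⟨0, hm⟩ = mroot3 m + 1))

/-- `g(u) = E[Wel(J*(u),u)] / Wel(1,u)` where `1` is the first candidate. -/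
noncomputable def gfun {n m : ℕ} (hm : 0 < m) (u : Fin n → Fin m → ℝ) : ℝ :=
  expWel Jstar u / Wel ⟨0, hm⟩ u

/-- The minimum (as an infimum) of `f` over profiles all of whose preference
functions satisfy `P`. -/
noncomputable def minOver {n m : ℕ} (P : (Fin m → ℝ) → Prop)
    (f : (Fin n → Fin m → ℝ) → ℝ) : ℝ :=
  sInf {r | ∃ u : Fin n → Fin m → ℝ, (∀ i, P (u i)) ∧ r = f u}

/-!
Unilaterality and anonymity force `J u = J (u i, …, u i)` for every voter `i`, so `J` is the
average over the voters of a one-voter mechanism. By neutrality and ordinality this one-voter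
mechanism lets the candidate in position `r` of the reported ranking win with a probability `p r`
that does not depend on the ranking, and truthfulness against swapping two adjacent candidates
makes `p` non-increasing. A non-increasing distribution on positions is the convex combination
of the uniform distributions on the top `q` positions with weights `q (p (q - 1) - p q)`.
-/

def rankWeight (p : ℕ → ℝ) (q : ℕ) : ℝ := q * (p (q - 1) - p q)

lemma rankWeight_nonneg {p : ℕ → ℝ} (hp : Antitone p) (q : ℕ) : 0 ≤ rankWeight p q :=
  mul_nonneg q.cast_nonneg (sub_nonneg.2 (hp (Nat.sub_le q 1)))

lemma rankWeight_succ_mul_inv (p : ℕ → ℝ) (q : ℕ) :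
    rankWeight p (q + 1) * ((q + 1 : ℕ) : ℝ)⁻¹ = p q - p (q + 1) := by
  rw [rankWeight, Nat.add_sub_cancel, mul_comm, inv_mul_cancel_left₀ (by positivity)]

lemma sum_Icc_rankWeight (p : ℕ → ℝ) (M : ℕ) :
    ∑ q ∈ Icc 1 M, rankWeight p q = ∑ r ∈ range M, p r - M * p M := by
  induction M with
  | zero => simp
  | succ M ih =>
    rw [sum_Icc_succ_top (by omega), ih, sum_range_succ, rankWeight, Nat.add_sub_cancel]
    push_cast
    ring

lemma sum_Icc_rankWeight_mul_ite (p : ℕ → ℝ) {r M : ℕ} (hrM : r < M) :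
    ∑ q ∈ Icc 1 M, rankWeight p q * (if r < q then (q : ℝ)⁻¹ else 0) = p r - p M := by
  induction M, hrM using Nat.le_induction with
  | base =>
    rw [sum_Icc_succ_top (by omega), if_pos r.lt_add_one, rankWeight_succ_mul_inv,
      sum_eq_zero fun q hq => by rw [if_neg (by rw [mem_Icc] at hq; omega), mul_zero], zero_add]
  | succ M hrM ih =>
    rw [sum_Icc_succ_top (by omega), ih, if_pos (by omega), rankWeight_succ_mul_inv]
    ring

section Preferences

variable {m : ℕ}

/-- 0-based, unlike `rnk`. -/
noncomputable def position (v : Fin m → ℝ) (j : Fin m) : ℕ := #{j' | v j < v j'}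

lemma rnk_eq_position_add_one {v : Fin m → ℝ} (hv : Function.Injective v) (j : Fin m) :
    rnk v j = position v j + 1 := by
  have : univ.filter (fun j' => v j < v j' ∨ (v j' = v j ∧ j' ≤ j)) =
      insert j (univ.filter fun j' => v j < v j') := by
    ext j'
    simp only [mem_filter, mem_univ, true_and, mem_insert]
    constructor
    · rintro (h | ⟨h, -⟩)
      · exact .inr h
      · exact .inl (hv h)
    · rintro (rfl | h)
      · exact .inr ⟨rfl, le_rfl⟩
      · exact .inl h
  rw [rnk, this, card_insert_of_notMem (by simp), position]

lemma position_lt (v : Fin m → ℝ) (j : Fin m) : position v j < m :=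
  (card_lt_univ_of_notMem (x := j) (by simp)).trans_eq (Fintype.card_fin m)

lemma position_lt_position_of_lt {v : Fin m → ℝ} {a b : Fin m} (h : v a < v b) :
    position v b < position v a :=
  card_lt_card ⟨fun j hj => by simp only [mem_filter, mem_univ, true_and] at hj ⊢; linarith,
    fun hsub => lt_irrefl (v b) (mem_filter.1 (hsub (mem_filter.2 ⟨mem_univ _, h⟩))).2⟩

lemma position_lt_position_iff {v : Fin m → ℝ} (hv : Function.Injective v) {a b : Fin m} :
    position v b < position v a ↔ v a < v b := by
  refine ⟨fun h => ?_, position_lt_position_of_lt⟩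
  rcases lt_trichotomy (v a) (v b) with hab | hab | hab
  · exact hab
  · rw [hv hab] at h; exact absurd h (lt_irrefl _)
  · exact absurd (position_lt_position_of_lt hab) h.asymm

lemma position_injective {v : Fin m → ℝ} (hv : Function.Injective v) :
    Function.Injective (position v) := by
  intro a b hab
  by_contra hne
  rcases (hv.ne hne).lt_or_gt with h | h
  · exact (position_lt_position_of_lt h).ne hab.symm
  · exact (position_lt_position_of_lt h).ne hab

noncomputable def positionPerm {v : Fin m → ℝ} (hv : Function.Injective v) : Equiv.Perm (Fin m) :=
  Equiv.ofBijective (fun j => ⟨position v j, position_lt v j⟩)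
    (Finite.injective_iff_bijective.mp fun _ _ h => position_injective hv (Fin.val_eq_of_eq h))

lemma lt_comp_positionPerm_symm_iff {v : Fin m → ℝ} (hv : Function.Injective v) {a b : Fin m} :
    v ((positionPerm hv).symm a) < v ((positionPerm hv).symm b) ↔ b < a := by
  rw [← position_lt_position_iff hv, Fin.lt_def]
  conv_rhs => rw [← (positionPerm hv).apply_symm_apply a, ← (positionPerm hv).apply_symm_apply b]
  rfl

lemma IsPrefU.comp_perm {v : Fin m → ℝ} (hv : IsPrefU v) (τ : Equiv.Perm (Fin m)) :
    IsPrefU (v ∘ τ) := by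
  obtain ⟨⟨hb, ⟨j₀, h₀⟩, ⟨j₁, h₁⟩⟩, hinj⟩ := hv
  exact ⟨⟨fun j => hb (τ j), ⟨τ.symm j₀, by simp [h₀]⟩, ⟨τ.symm j₁, by simp [h₁]⟩⟩,
    hinj.comp τ.injective⟩

noncomputable def descPref (m : ℕ) : Fin m → ℝ := fun j => 1 - j / (m - 1)

lemma descPref_lt_descPref_iff (hm : 2 ≤ m) {a b : Fin m} :
    descPref m a < descPref m b ↔ b < a := by
  have : (0 : ℝ) < m - 1 := by
    have : (2 : ℝ) ≤ m := by exact_mod_cast hm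
    linarith
  rw [descPref, descPref, sub_lt_sub_iff_left, div_lt_div_iff_of_pos_right this, Fin.lt_def]
  exact Nat.cast_lt

lemma isPrefU_descPref (hm : 2 ≤ m) : IsPrefU (descPref m) := by
  have hm1 : (0 : ℝ) < m - 1 := by
    have : (2 : ℝ) ≤ m := by exact_mod_cast hm
    linarith
  refine ⟨⟨fun j => ⟨?_, ?_⟩, ⟨⟨m - 1, by omega⟩, ?_⟩, ⟨⟨0, by omega⟩, by simp [descPref]⟩⟩, ?_⟩
  · have : (j : ℝ) ≤ m - 1 := by
      have : (j : ℝ) + 1 ≤ m := by exact_mod_cast j.isLt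
      linarith
    simp only [descPref, sub_nonneg]
    exact (div_le_one hm1).2 this
  · simp only [descPref, sub_le_self_iff]
    positivity
  · simp [descPref, Nat.cast_sub (by omega : 1 ≤ m), hm1.ne']
  · intro a b hab
    by_contra hne
    rcases Fin.lt_or_lt_of_ne hne with h | h
    · exact ((descPref_lt_descPref_iff hm).2 h).ne' hab
    · exact ((descPref_lt_descPref_iff hm).2 h).ne hab

end Preferences

lemma le_of_sum_swap_mul_le {α : Type*} [Fintype α] [DecidableEq α] {f v : α → ℝ} {a b : α}
    (h : ∑ j, f (Equiv.swap a b j) * v j ≤ ∑ j, f j * v j) (hv : v b < v a) : f b ≤ f a := by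
  have hab : a ≠ b := by rintro rfl; exact hv.false
  have hdiff : ∑ j, f j * v j - ∑ j, f (Equiv.swap a b j) * v j = (f a - f b) * (v a - v b) := by
    rw [← Equiv.sum_comp (Equiv.swap a b) fun j => f (Equiv.swap a b j) * v j]
    simp only [Equiv.swap_apply_self]
    rw [← sum_sub_distrib, Fintype.sum_eq_add a b hab fun j hj => by
      rw [Equiv.swap_apply_of_ne_of_ne hj.1 hj.2, sub_self], Equiv.swap_apply_left,
      Equiv.swap_apply_right]
    ring
  nlinarith

section Mechanism

variable {n m : ℕ} {J : (Fin n → Fin m → ℝ) → Fin m → ℝ}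

def unanimous (J : (Fin n → Fin m → ℝ) → Fin m → ℝ) (v : Fin m → ℝ) : Fin m → ℝ :=
  J fun _ => v

/-- Anonymity lets every voter play the role of the dictator. -/
lemma eq_unanimous_of_anonymous_of_unilateral (hA : AnonymousMech J) (hUni : Unilateral J)
    {u : Fin n → Fin m → ℝ} (hu : IsProfileU u) (i : Fin n) : J u = unanimous J (u i) := by
  obtain ⟨i₀, hi₀⟩ := hUni
  rw [← hA (Equiv.swap i₀ i) u hu]
  exact hi₀ _ _ (fun k => hu _) (fun _ => hu i) (by simp)

lemma unanimous_comp_perm (hN : Neutral J) {v : Fin m → ℝ} (hv : IsPrefU v)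
    (τ : Equiv.Perm (Fin m)) (j : Fin m) : unanimous J (v ∘ τ) j = unanimous J v (τ j) :=
  hN τ (fun _ => v) (fun _ => hv) j

lemma unanimous_truthful (hA : AnonymousMech J) (hUni : Unilateral J) (hT : Truthful J)
    {v v' : Fin m → ℝ} (hv : IsPrefU v) (hv' : IsPrefU v') :
    ∑ j, unanimous J v' j * v j ≤ ∑ j, unanimous J v j * v j := by
  obtain ⟨i, -⟩ := id hUni
  have hupd : IsProfileU (Function.update (fun _ => v) i v') := by
    intro k
    rcases eq_or_ne k i with rfl | hk
    · simpa using hv'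
    · simpa [hk] using hv
  have h := hT (fun _ => v) (fun _ => hv) i v' hv'
  rwa [eq_unanimous_of_anonymous_of_unilateral hA hUni hupd i, Function.update_self] at h

/-- For neutral ordinal `J`, the probability that the candidate in position `r` of any unanimous
tie-free ranking wins (see `unanimous_eq_rankProb`); `0` for `r ≥ m`. -/
noncomputable def rankProb (J : (Fin n → Fin m → ℝ) → Fin m → ℝ) (r : ℕ) : ℝ :=
  if h : r < m then unanimous J (descPref m) ⟨r, h⟩ else 0

lemma unanimous_eq_rankProb (hm : 2 ≤ m) (hN : Neutral J) (hOrd : OrdinalMech J)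
    {v : Fin m → ℝ} (hv : IsPrefU v) (j : Fin m) :
    unanimous J v j = rankProb J (position v j) := by
  set e := positionPerm hv.2
  have hord : unanimous J (v ∘ e.symm) = unanimous J (descPref m) :=
    hOrd _ _ (fun _ => hv.comp_perm _) (fun _ => isPrefU_descPref hm) fun _ a b => by
      rw [descPref_lt_descPref_iff hm]
      exact lt_comp_positionPerm_symm_iff hv.2
  calc unanimous J v j = unanimous J (v ∘ e.symm) (e j) := by
        rw [unanimous_comp_perm hN hv, e.symm_apply_apply]
    _ = rankProb J (position v j) := by
        rw [hord, rankProb, dif_pos (position_lt v j)]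
        rfl

lemma rankProb_nonneg (hm : 2 ≤ m) (hJ : MechU J) (r : ℕ) : 0 ≤ rankProb J r := by
  unfold rankProb
  split
  · exact (hJ _ fun _ => isPrefU_descPref hm).1 _
  · exact le_rfl

lemma rankProb_self : rankProb J m = 0 := dif_neg (lt_irrefl m)

lemma sum_range_rankProb (hm : 2 ≤ m) (hJ : MechU J) : ∑ r ∈ range m, rankProb J r = 1 := by
  rw [← Fin.sum_univ_eq_sum_range, ← (hJ _ fun _ => isPrefU_descPref hm).2]
  exact sum_congr rfl fun j _ => dif_pos j.isLt

lemma rankProb_antitone (hm : 2 ≤ m) (hJ : MechU J) (hA : AnonymousMech J) (hN : Neutral J)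
    (hUni : Unilateral J) (hT : Truthful J) : Antitone (rankProb J) := by
  refine antitone_nat_of_succ_le fun r => ?_
  by_cases hr : r + 1 < m
  · set a : Fin m := ⟨r, by omega⟩
    set b : Fin m := ⟨r + 1, hr⟩
    have h := unanimous_truthful hA hUni hT (isPrefU_descPref hm)
      ((isPrefU_descPref hm).comp_perm (Equiv.swap a b))
    simp only [unanimous_comp_perm hN (isPrefU_descPref hm)] at h
    rw [rankProb, rankProb, dif_pos hr, dif_pos (by omega)]
    exact le_of_sum_swap_mul_le h ((descPref_lt_descPref_iff hm).2 (Fin.lt_def.2 r.lt_add_one))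
  · rw [rankProb, dif_neg hr]
    exact rankProb_nonneg hm hJ r

end Mechanism

theorem stmt3_general (n m : ℕ) (hm : 2 ≤ m)
    (J : (Fin n → Fin m → ℝ) → Fin m → ℝ)
    (hJ : MechU J) (hA : AnonymousMech J) (hN : Neutral J)
    (hOrd : OrdinalMech J) (hUni : Unilateral J) (hT : Truthful J) :
    ∃ w : ℕ → ℝ, (∀ q, 0 ≤ w q) ∧ (∑ q ∈ Finset.Icc 1 m, w q = 1) ∧
      ∀ u, IsProfileU u → ∀ j, J u j = ∑ q ∈ Finset.Icc 1 m, w q * Jone q u j := by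
  have hn : (n : ℝ) ≠ 0 := by
    obtain ⟨i, -⟩ := id hUni
    exact_mod_cast i.pos.ne'
  refine ⟨rankWeight (rankProb J),
    rankWeight_nonneg (rankProb_antitone hm hJ hA hN hUni hT), ?_, fun u hu j => ?_⟩
  · rw [sum_Icc_rankWeight, sum_range_rankProb hm hJ, rankProb_self, mul_zero, sub_zero]
  · have hvoter : ∀ i, J u j = rankProb J (position (u i) j) := fun i => by
      rw [eq_unanimous_of_anonymous_of_unilateral hA hUni hu i,
        unanimous_eq_rankProb hm hN hOrd (hu i)]
    have hJone : ∀ i, ∑ q ∈ Icc 1 m, rankWeight (rankProb J) q *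
        (if rnk (u i) j ≤ q then (q : ℝ)⁻¹ else 0) = J u j := fun i => by
      simp only [rnk_eq_position_add_one (hu i).2, Nat.add_one_le_iff]
      rw [sum_Icc_rankWeight_mul_ite _ (position_lt _ _), rankProb_self, sub_zero, hvoter i]
    simp only [Jone, mul_div_assoc', ← sum_div, mul_sum]
    rw [sum_comm, sum_congr rfl fun i _ => hJone i, sum_const, card_univ, Fintype.card_fin,
      nsmul_eq_mul, mul_div_cancel_left₀ _ hn]

/-- every anonymous, neutral, ordinal, unilateral and truthful
mechanism on tie-free profiles is a convex combination of the mechanisms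
`J^{1,q}_U` for `q ∈ {1,…,m}`. -/
theorem stmt3 (n m : ℕ) (hn : 1 ≤ n) (hm : 2 ≤ m)
    (J : (Fin n → Fin m → ℝ) → Fin m → ℝ)
    (hJ : MechU J) (hA : AnonymousMech J) (hN : Neutral J)
    (hOrd : OrdinalMech J) (hUni : Unilateral J) (hT : Truthful J) :
    ∃ w : ℕ → ℝ, (∀ q, 0 ≤ w q) ∧ (∑ q ∈ Finset.Icc 1 m, w q = 1) ∧
      ∀ u, IsProfileU u → ∀ j, J u j = ∑ q ∈ Finset.Icc 1 m, w q * Jone q u j :=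
  stmt3_general n m hm J hJ hA hN hOrd hUni hT
end

section
/- For every q ∈ {1,...,m}, the mechanism J^{1,q} is truthful: for every profile u ∈ V^n, every voter i and every u_i' ∈ V, E[u_i(J^{1,q}(u_i,u_{-i}))] ≥ E[u_i(J^{1,q}(u_i',u_{-i}))]. -/
open Finset

/-
Under `J^{1,q}` the expected utility of voter `i` is the average, over all voters `i'`, of the
mean of `u i` on the `q` candidates ranked highest by `u i'`. A misreport only changes the term
`i' = i`, and among sets of candidates of a fixed size the sum of `u i` is largest on the
candidates ranked highest by `u i` itself.
-/

section SumOfCardEq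

variable {ι M : Type*} [AddCommMonoid M] [LinearOrder M] [IsOrderedAddMonoid M]

theorem Finset.sum_le_sum_of_card_eq_of_forall_le {s t : Finset ι} {f : ι → M}
    (hcard : #s = #t) (h : ∀ a ∈ s, ∀ b ∈ t, f a ≤ f b) : ∑ a ∈ s, f a ≤ ∑ b ∈ t, f b := by
  rcases s.eq_empty_or_nonempty with rfl | hs
  · rw [card_empty, eq_comm, card_eq_zero] at hcard
    simp [hcard]
  obtain ⟨a, ha, hmax⟩ := s.exists_max_image f hs
  calc ∑ x ∈ s, f x ≤ #s • f a := sum_le_card_nsmul s f _ hmax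
    _ = #t • f a := by rw [hcard]
    _ ≤ ∑ x ∈ t, f x := card_nsmul_le_sum t f _ (h a ha)

theorem Finset.sum_le_sum_of_card_eq_of_forall_notMem_le [DecidableEq ι] {s t : Finset ι}
    {f : ι → M} (hcard : #t = #s) (h : ∀ a ∈ s, ∀ b ∉ s, f b ≤ f a) :
    ∑ b ∈ t, f b ≤ ∑ a ∈ s, f a := by
  rw [← sum_sdiff (inter_subset_left : t ∩ s ⊆ t), ← sum_sdiff (inter_subset_right : t ∩ s ⊆ s),
    sdiff_inter_self_left, sdiff_inter_self_right]
  gcongr ?_ + _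
  exact sum_le_sum_of_card_eq_of_forall_le (card_sdiff_comm hcard)
    fun b hb a ha => h a (mem_sdiff.1 ha).1 b (mem_sdiff.1 hb).2

end SumOfCardEq

section Ranking

variable {m : ℕ} (w : Fin m → ℝ)

/-- The tie-broken preference order of `rnk`: decreasing utility, then increasing index. -/
def prefKey (j : Fin m) : ℝᵒᵈ ×ₗ Fin m := toLex (OrderDual.toDual (w j), j)

theorem rnk_eq_card_prefKey_le (j : Fin m) :
    rnk w j = #{j' | prefKey w j' ≤ prefKey w j} := by
  simp only [rnk, prefKey, Prod.Lex.toLex_le_toLex, OrderDual.toDual_lt_toDual,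
    OrderDual.toDual_inj]

theorem prefKey_injective : Function.Injective (prefKey w) := fun j j' h => by
  simpa [prefKey] using congrArg (fun x => (ofLex x).2) h

theorem rnk_lt_rnk {j j' : Fin m} (h : prefKey w j < prefKey w j') : rnk w j < rnk w j' := by
  rw [rnk_eq_card_prefKey_le, rnk_eq_card_prefKey_le]
  refine card_lt_card ⟨fun x hx => ?_, fun hsub => ?_⟩
  · simp only [mem_filter, mem_univ, true_and] at hx ⊢
    exact hx.trans h.le
  · have hj' := hsub (mem_filter.2 ⟨mem_univ j', le_rfl⟩)
    exact not_le.2 h (mem_filter.1 hj').2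

theorem rnk_injective : Function.Injective (rnk w) := fun j j' h => by
  by_contra hne
  rcases lt_or_gt_of_ne ((prefKey_injective w).ne hne) with hlt | hlt
  · exact (rnk_lt_rnk w hlt).ne h
  · exact (rnk_lt_rnk w hlt).ne' h

theorem rnk_mem_Icc (j : Fin m) : rnk w j ∈ Icc 1 m := by
  rw [rnk_eq_card_prefKey_le, mem_Icc]
  exact ⟨card_pos.2 ⟨j, by simp⟩, (card_filter_le _ _).trans (card_fin m).le⟩

theorem image_rnk : univ.image (rnk w) = Icc 1 m :=
  eq_of_subset_of_card_le (image_subset_iff.2 fun j _ => rnk_mem_Icc w j)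
    (by simp [card_image_of_injective _ (rnk_injective w)])

noncomputable def topSet (q : ℕ) : Finset (Fin m) := {j | rnk w j ≤ q}

theorem card_topSet (q : ℕ) : #(topSet w q) = min q m := by
  have hIcc : {k ∈ Icc 1 m | k ≤ q} = Icc 1 (min q m) := by
    ext k
    simp only [mem_filter, mem_Icc]
    omega
  rw [topSet, ← card_image_of_injective _ (rnk_injective w), ← filter_image (p := (· ≤ q)),
    image_rnk, hIcc, Nat.card_Icc, Nat.add_sub_cancel]

theorem le_of_mem_topSet_of_notMem {q : ℕ} {a b : Fin m} (ha : a ∈ topSet w q)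
    (hb : b ∉ topSet w q) : w b ≤ w a := by
  by_contra! hlt
  have hkey : prefKey w b < prefKey w a :=
    Prod.Lex.toLex_lt_toLex.2 (Or.inl (OrderDual.toDual_lt_toDual.2 hlt))
  simp only [topSet, mem_filter, mem_univ, true_and] at ha hb
  exact hb ((rnk_lt_rnk w hkey).le.trans ha)

theorem sum_topSet_le_sum_topSet_self (q : ℕ) (f : Fin m → ℝ) :
    ∑ j ∈ topSet w q, f j ≤ ∑ j ∈ topSet f q, f j :=
  sum_le_sum_of_card_eq_of_forall_notMem_le (by rw [card_topSet, card_topSet])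
    fun _ ha _ hb => le_of_mem_topSet_of_notMem f ha hb

end Ranking

theorem sum_Jone_mul (q : ℕ) {n m : ℕ} (w : Fin n → Fin m → ℝ) (f : Fin m → ℝ) :
    ∑ j, Jone q w j * f j = (∑ i, (∑ j ∈ topSet (w i) q, f j) / q) / n := by
  simp only [Jone, topSet, sum_filter, div_mul_eq_mul_div, ← sum_div, sum_mul, ite_mul, zero_mul]
  rw [sum_comm]
  congr 1
  simp only [sum_div, ite_div, zero_div, inv_mul_eq_div]

theorem stmt14_general (n m : ℕ)
    (q : ℕ)
    (u : Fin n → Fin m → ℝ) (i : Fin n)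
    (v : Fin m → ℝ) :
    ∑ j, Jone q (Function.update u i v) j * u i j ≤ ∑ j, Jone q u j * u i j := by
  rw [sum_Jone_mul, sum_Jone_mul]
  refine div_le_div_of_nonneg_right (sum_le_sum fun i' _ => ?_) n.cast_nonneg
  refine div_le_div_of_nonneg_right ?_ q.cast_nonneg
  rcases eq_or_ne i' i with rfl | hne
  · simpa using sum_topSet_le_sum_topSet_self v q (u i')
  · rw [Function.update_of_ne hne]

/-- for every `q ∈ {1,…,m}`, the mechanism `J^{1,q}` is
truthful on all normalized profiles. -/
theorem stmt14 (n m : ℕ) (hn : 1 ≤ n) (hm : 2 ≤ m)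
    (q : ℕ) (hq1 : 1 ≤ q) (hqm : q ≤ m)
    (u : Fin n → Fin m → ℝ) (hu : IsProfile u) (i : Fin n)
    (v : Fin m → ℝ) (hv : IsPref v) :
    ∑ j, Jone q (Function.update u i v) j * u i j ≤ ∑ j, Jone q u j * u i j :=
  stmt14_general n m q u i v
end

section
/- For every q ∈ {⌊n/2⌋+1,...,n+1}, the mechanism J^{2,q} is truthful: for every profile u ∈ V^n, every voter i and every u_i' ∈ V, E[u_i(J^{2,q}(u_i,u_{-i}))] ≥ E[u_i(J^{2,q}(u_i',u_{-i}))]. -/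
open Finset

/-- Auxiliary payoff function: utility of voter with values `a` (for `j₀`)
and `b` (for `j₁`) when `c` voters prefer `j₀`. -/
noncomputable def pay (q n : ℕ) (a b : ℝ) (c : ℕ) : ℝ :=
  if q ≤ c then a else if q ≤ n - c then b else (a + b) / 2

lemma pay_mono (q n : ℕ) {a b : ℝ} (hab : b ≤ a) {c c' : ℕ} (h : c' ≤ c) :
    pay q n a b c' ≤ pay q n a b c := by
  unfold pay
  by_cases h1 : q ≤ c'
  · rw [if_pos h1, if_pos (h1.trans h)]
  · rw [if_neg h1]
    by_cases h2 : q ≤ c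
    · rw [if_pos h2]; split <;> linarith
    · rw [if_neg h2]
      by_cases h3 : q ≤ n - c
      · rw [if_pos h3, if_pos (h3.trans (Nat.sub_le_sub_left h n))]
      · rw [if_neg h3]; split <;> linarith

lemma pay_anti (q n : ℕ) {a b : ℝ} (hab : a ≤ b) {c c' : ℕ} (h : c ≤ c') :
    pay q n a b c' ≤ pay q n a b c := by
  unfold pay
  by_cases h1 : q ≤ c'
  · rw [if_pos h1]; split_ifs <;> linarith
  · have h2 : ¬ q ≤ c := fun hc => h1 (hc.trans h)
    rw [if_neg h1, if_neg h2]
    by_cases h3 : q ≤ n - c'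
    · rw [if_pos h3, if_pos (h3.trans (Nat.sub_le_sub_left h n))]
    · rw [if_neg h3]; split <;> linarith

lemma jtwo_sum_eq (q : ℕ) {n m : ℕ} (w : Fin n → Fin m → ℝ) (x : Fin m → ℝ) :
    ∑ j, Jtwo q w j * x j =
      (∑ j₀ : Fin m, ∑ j₁ : Fin m, if j₀ = j₁ then 0
        else pay q n (x j₀) (x j₁)
          ((Finset.univ.filter fun i' => Prefers (w i') j₀ j₁).card))
        / ((m * (m - 1) : ℕ) : ℝ) := by
  unfold Jtwo pay
  simp only [div_mul_eq_mul_div]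
  rw [← Finset.sum_div]
  congr 1
  simp only [Finset.sum_mul]
  rw [Finset.sum_comm]
  refine Finset.sum_congr rfl fun j₀ _ => ?_
  rw [Finset.sum_comm]
  refine Finset.sum_congr rfl fun j₁ _ => ?_
  by_cases h01 : j₀ = j₁
  · simp [h01]
  rw [if_neg h01]
  by_cases hA : q ≤ (Finset.univ.filter fun i' => Prefers (w i') j₀ j₁).card
  · simp [if_neg h01, hA, ite_mul, Finset.sum_ite_eq']
  by_cases hB : q ≤ n - (Finset.univ.filter fun i' => Prefers (w i') j₀ j₁).card
  · simp [if_neg h01, hA, hB, ite_mul, Finset.sum_ite_eq']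
  · simp only [if_neg h01, if_neg hA, if_neg hB, add_mul, ite_mul, zero_mul,
      Finset.sum_add_distrib, Finset.sum_ite_eq', Finset.mem_univ, if_true]
    ring

/-- for every `q ∈ {⌊n/2⌋+1,…,n+1}`, the mechanism `J^{2,q}` is
truthful on all normalized profiles. -/
theorem stmt15 (n m : ℕ) (hn : 1 ≤ n) (hm : 2 ≤ m)
    (q : ℕ) (hq1 : n/2 + 1 ≤ q) (hq2 : q ≤ n + 1)
    (u : Fin n → Fin m → ℝ) (hu : IsProfile u) (i : Fin n)
    (v : Fin m → ℝ) (hv : IsPref v) :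
    ∑ j, Jtwo q (Function.update u i v) j * u i j ≤ ∑ j, Jtwo q u j * u i j := by
  rw [jtwo_sum_eq, jtwo_sum_eq]
  have hD : (0 : ℝ) ≤ ((m * (m - 1) : ℕ) : ℝ) := Nat.cast_nonneg _
  gcongr with j₀ _ j₁ _
  by_cases h01 : j₀ = j₁
  · simp [h01]
  rw [if_neg h01, if_neg h01]
  by_cases p : Prefers (u i) j₀ j₁
  · have hab : u i j₁ ≤ u i j₀ := by
      rcases p with h | ⟨h, _⟩
      · exact h.le
      · exact h.ge
    refine pay_mono q n hab (Finset.card_le_card fun i' hi' => ?_)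
    simp only [Finset.mem_filter, Finset.mem_univ, true_and] at hi' ⊢
    by_cases h : i' = i
    · subst h; exact p
    · rwa [Function.update_of_ne h] at hi'
  · have hab : u i j₀ ≤ u i j₁ := by
      by_contra h
      push_neg at h
      exact p (Or.inl h)
    refine pay_anti q n hab (Finset.card_le_card fun i' hi' => ?_)
    simp only [Finset.mem_filter, Finset.mem_univ, true_and] at hi' ⊢
    by_cases h : i' = i
    · subst h; exact absurd hi' p
    · rwa [Function.update_of_ne h]
end

section
/- Without the normalization assumption the problem trivializes: let n = m ≥ 2 and allow preference functions to be arbitrary maps u : {1,...,m} → [0,1]. Then every ordinal mechanism J satisfies ratio(J) ≤ 1/m; more precisely, for every ε > 0 there exists a profile u of injective (tie-free) preference functions such that E[Wel(J(u),u)] ≤ (1/m + ε) · Wel(RV(u),u). -/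
open Finset

section AuxStmt19

/-- Base ordinal preference: voter `i` ranks candidate `i` first; values in `[0,1)`. -/
noncomputable def baseU (m : ℕ) (i j : Fin m) : ℝ :=
  (((m - 1 - ((j - i : Fin m)).val : ℕ)) : ℝ) / m

lemma baseU_nonneg {m : ℕ} (i j : Fin m) : 0 ≤ baseU m i j := by
  unfold baseU; positivity

lemma baseU_lt_one {m : ℕ} (hm : 0 < m) (i j : Fin m) : baseU m i j < 1 := by
  unfold baseU
  rw [div_lt_one (by exact_mod_cast hm)]
  exact_mod_cast Nat.lt_of_le_of_lt (Nat.sub_le _ _) (Nat.sub_lt hm one_pos)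

lemma baseU_inj {m : ℕ} (i : Fin m) : Function.Injective (baseU m i) := by
  intro j j' h
  have hm : 0 < m := i.pos
  haveI : NeZero m := ⟨by omega⟩
  have hmR : (0:ℝ) < m := by exact_mod_cast hm
  unfold baseU at h
  rw [div_eq_div_iff (ne_of_gt hmR) (ne_of_gt hmR)] at h
  have h3 : (m - 1 - ((j - i : Fin m)).val) = (m - 1 - ((j' - i : Fin m)).val) := by
    exact_mod_cast mul_right_cancel₀ (ne_of_gt hmR) h
  have hv : ((j - i : Fin m)).val = ((j' - i : Fin m)).val := by
    have := (j - i).is_lt; have := (j' - i).is_lt; omega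
  have : (j - i : Fin m) = (j' - i : Fin m) := Fin.ext hv
  exact sub_left_inj.mp this

lemma baseU_le_self {m : ℕ} (i j : Fin m) : baseU m i j ≤ baseU m i i := by
  haveI : NeZero m := ⟨by have := i.pos; omega⟩
  have hm : 0 < m := i.pos
  have hmR : (0:ℝ) < m := by exact_mod_cast hm
  have hii : (i - i : Fin m) = 0 := sub_self i
  unfold baseU
  rw [hii, Fin.val_zero]
  have hle : ((m - 1 - ((j - i : Fin m)).val : ℕ) : ℝ) ≤ ((m - 1 - 0 : ℕ) : ℝ) := by
    exact_mod_cast Nat.sub_le_sub_left (Nat.zero_le _) (m - 1)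
  rw [div_le_div_iff₀ hmR hmR]
  exact mul_le_mul_of_nonneg_right hle hmR.le

lemma baseU_lt_self {m : ℕ} (i j : Fin m) (h : j ≠ i) : baseU m i j < baseU m i i := by
  rcases lt_or_eq_of_le (baseU_le_self i j) with h1 | h1
  · exact h1
  · exact absurd (baseU_inj i h1) h

end AuxStmt19

/-- without the normalization assumption the problem
trivializes: with `n = m` voters and arbitrary `[0,1]`-valued preferences,
every ordinal mechanism `J` has, for every `ε > 0`, a tie-free profile `u`
with `E[Wel(J(u),u)] ≤ (1/m + ε) · Wel(RV(u),u)`. -/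
theorem stmt19 (m : ℕ) (hm : 2 ≤ m)
    (J : (Fin m → Fin m → ℝ) → Fin m → ℝ)
    (hJ : ∀ u : Fin m → Fin m → ℝ, (∀ i j, 0 ≤ u i j ∧ u i j ≤ 1) → IsDist (J u))
    (hOrd : ∀ u u' : Fin m → Fin m → ℝ,
      (∀ i j, 0 ≤ u i j ∧ u i j ≤ 1) → (∀ i j, 0 ≤ u' i j ∧ u' i j ≤ 1) →
      (∀ i (j j' : Fin m), u i j < u i j' ↔ u' i j < u' i j') → J u = J u') :
    ∀ ε : ℝ, 0 < ε → ∃ u : Fin m → Fin m → ℝ,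
      (∀ i j, 0 ≤ u i j ∧ u i j ≤ 1) ∧ (∀ i, Function.Injective (u i)) ∧
      expWel J u ≤ (1/(m : ℝ) + ε) * Wel (RV (show 0 < m by omega) u) u := by
  intro ε hε
  have hm0 : 0 < m := by omega
  haveI : NeZero m := ⟨by omega⟩
  have hmR : (0:ℝ) < m := by exact_mod_cast hm0
  set δ : ℝ := min ε 1 / (2 * m) with hδdef
  have hδpos : 0 < δ := div_pos (lt_min hε one_pos) (by positivity)
  have hδlt1 : δ < 1 := by
    rw [hδdef, div_lt_one (by positivity)]
    have h1 : min ε 1 ≤ 1 := min_le_right _ _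
    have h2 : (1:ℝ) ≤ m := by exact_mod_cast hm0
    nlinarith
  -- the base profile
  set u₀ : Fin m → Fin m → ℝ := fun i j => baseU m i j with hu₀
  have hu₀b : ∀ i j, 0 ≤ u₀ i j ∧ u₀ i j ≤ 1 :=
    fun i j => ⟨baseU_nonneg _ _, (baseU_lt_one hm0 _ _).le⟩
  set p : Fin m → ℝ := J u₀ with hpdef
  obtain ⟨hpnn, hpsum⟩ := hJ u₀ hu₀b
  -- choose a candidate with probability ≤ 1/m
  obtain ⟨js, -, hjs⟩ : ∃ j ∈ Finset.univ, p j ≤ 1/(m:ℝ) := by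
    apply Finset.exists_le_of_sum_le Finset.univ_nonempty
    rw [hpsum, Finset.sum_const, Finset.card_univ, Fintype.card_fin, nsmul_eq_mul]
    rw [mul_one_div, div_self (ne_of_gt hmR)]
  -- the modified profile
  set u : Fin m → Fin m → ℝ :=
    fun i j => if i = js ∧ j = js then 1 else δ * baseU m i j with hudef
  have hval : ∀ i j, ¬(i = js ∧ j = js) → u i j = δ * baseU m i j := by
    intro i j h; simp only [hudef, if_neg h]
  have hujj : u js js = 1 := by simp [hudef]
  have hsmall : ∀ i j, ¬(i = js ∧ j = js) → u i j < 1 := by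
    intro i j h
    rw [hval i j h]
    calc δ * baseU m i j ≤ δ * 1 := by
          have := (baseU_lt_one hm0 i j).le
          have := baseU_nonneg i j
          nlinarith
      _ = δ := mul_one δ
      _ < 1 := hδlt1
  have hub : ∀ i j, 0 ≤ u i j ∧ u i j ≤ 1 := by
    intro i j
    by_cases h : i = js ∧ j = js
    · simp [hudef, h]
    · refine ⟨?_, (hsmall i j h).le⟩
      rw [hval i j h]
      have := baseU_nonneg i j
      positivity
  -- injectivity
  have hinj : ∀ i, Function.Injective (u i) := by
    intro i j j' h
    by_cases hj : i = js ∧ j = js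
    · by_cases hj' : i = js ∧ j' = js
      · rw [hj.2, hj'.2]
      · exfalso
        rw [show u i j = 1 by simp [hudef, hj]] at h
        exact absurd h.symm (ne_of_lt (hsmall i j' hj'))
    · by_cases hj' : i = js ∧ j' = js
      · exfalso
        rw [show u i j' = 1 by simp [hudef, hj']] at h
        exact absurd h (ne_of_lt (hsmall i j hj))
      · rw [hval i j hj, hval i j' hj'] at h
        exact baseU_inj i (mul_left_cancel₀ (ne_of_gt hδpos) h)
  -- ordinal equivalence with the base profile
  have hord : ∀ i (j j' : Fin m), u i j < u i j' ↔ u₀ i j < u₀ i j' := by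
    intro i j j'
    have hmul : δ * baseU m i j < δ * baseU m i j' ↔ baseU m i j < baseU m i j' :=
      mul_lt_mul_iff_right₀ hδpos
    by_cases hj : i = js ∧ j = js
    · by_cases hj' : i = js ∧ j' = js
      · rw [hj.2, hj'.2]; simp
      · obtain ⟨hi, hj2⟩ := hj
        constructor
        · intro hlt
          rw [show u i j = 1 by simp [hudef, hi, hj2]] at hlt
          exact absurd (hlt.trans (hsmall i j' hj')) (lt_irrefl 1)
        · intro hlt
          exfalso
          have hlt' : baseU m i j < baseU m i j' := hlt
          rw [hj2.trans hi.symm] at hlt'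
          exact absurd hlt' (not_lt.2 (baseU_le_self i j'))
    · by_cases hj' : i = js ∧ j' = js
      · constructor
        · intro _
          obtain ⟨hi, hjs'⟩ := hj'
          have hne : j ≠ i := by
            intro hc; exact hj ⟨hi, by rw [hc, hi]⟩
          simp only [hu₀]
          rw [hjs', ← hi]
          exact baseU_lt_self i j hne
        · intro _
          rw [show u i j' = 1 by simp [hudef, hj']]
          exact hsmall i j hj
      · rw [hval i j hj, hval i j' hj']
        exact hmul
  have hJeq : J u = J u₀ := hOrd u u₀ hub hu₀b hord
  -- welfare facts
  have hWelnn : ∀ j, 0 ≤ Wel j u := by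
    intro j; unfold Wel
    exact Finset.sum_nonneg fun i _ => (hub i j).1
  have hWjs : 1 ≤ Wel js u := by
    unfold Wel
    calc (1:ℝ) = u js js := hujj.symm
      _ ≤ ∑ i, u i js :=
        Finset.single_le_sum (fun i _ => (hub i js).1) (Finset.mem_univ js)
  have hWsmall : ∀ j, j ≠ js → Wel j u ≤ m * δ := by
    intro j hj
    unfold Wel
    calc ∑ i, u i j ≤ ∑ _i : Fin m, δ := by
          apply Finset.sum_le_sum
          intro i _
          rw [hval i j (by tauto)]
          have := (baseU_lt_one hm0 i j).le
          have := baseU_nonneg i j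
          nlinarith
      _ = m * δ := by
          rw [Finset.sum_const, Finset.card_univ, Fintype.card_fin, nsmul_eq_mul]
  have hRVmem : RV (show 0 < m by omega) u ∈
      Finset.univ.filter (fun j => ∀ j', Wel j' u ≤ Wel j u) :=
    Finset.min'_mem _ _
  have hWmax : ∀ j, Wel j u ≤ Wel (RV (show 0 < m by omega) u) u :=
    (Finset.mem_filter.1 hRVmem).2
  set W : ℝ := Wel (RV (show 0 < m by omega) u) u with hWdef
  have hW1 : 1 ≤ W := le_trans hWjs (hWmax js)
  refine ⟨u, hub, hinj, ?_⟩
  have hexp : expWel J u = ∑ j, p j * Wel j u := by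
    unfold expWel; rw [hJeq]
  rw [hexp]
  have hsplit : ∑ j, p j * Wel j u
      = p js * Wel js u + ∑ j ∈ Finset.univ.erase js, p j * Wel j u :=
    (Finset.add_sum_erase _ _ (Finset.mem_univ js)).symm
  rw [hsplit]
  have h1 : p js * Wel js u ≤ (1/(m:ℝ)) * W :=
    mul_le_mul hjs (hWmax js) (hWelnn js) (by positivity)
  have h2 : ∑ j ∈ Finset.univ.erase js, p j * Wel j u ≤ m * δ := by
    calc ∑ j ∈ Finset.univ.erase js, p j * Wel j u
        ≤ ∑ j ∈ Finset.univ.erase js, p j * (m * δ) := by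
          apply Finset.sum_le_sum
          intro j hj
          exact mul_le_mul_of_nonneg_left
            (hWsmall j (Finset.ne_of_mem_erase hj)) (hpnn j)
      _ = (∑ j ∈ Finset.univ.erase js, p j) * (m * δ) := by
          rw [← Finset.sum_mul]
      _ ≤ 1 * (m * δ) := by
          apply mul_le_mul_of_nonneg_right ?_ (by positivity)
          calc ∑ j ∈ Finset.univ.erase js, p j ≤ ∑ j, p j :=
                Finset.sum_le_sum_of_subset_of_nonneg
                  (Finset.erase_subset _ _) (fun j _ _ => hpnn j)
            _ = 1 := hpsum
      _ = m * δ := one_mul _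
  have hmd : (m:ℝ) * δ ≤ ε := by
    have heq : (m:ℝ) * δ = min ε 1 / 2 := by
      rw [hδdef]; field_simp
    rw [heq]
    have : min ε 1 ≤ ε := min_le_left _ _
    linarith
  calc p js * Wel js u + ∑ j ∈ Finset.univ.erase js, p j * Wel j u
      ≤ (1/(m:ℝ)) * W + ε := add_le_add h1 (h2.trans hmd)
    _ ≤ (1/(m:ℝ)) * W + ε * W := by nlinarith
    _ = (1/(m:ℝ) + ε) * W := by ring
end
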